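/- Let φ : [0, η) → [0, ∞) be concave and differentiable on (0, η) with φ' > 0, and let (rₖ) be a positive nonincreasing sequence with rₖ < η. Suppose for all k ≥ k₀: φ'(rₖ)(rₖ − r_{k+1}) ≥ m‖x^{k+1} − xᵏ‖ for some m > 0 and a sequence (xᵏ) in a Hilbert space converging to x*. Then by concavity φ(rₖ) − φ(r_{k+1}) ≥ φ'(rₖ)(rₖ − r_{k+1}) ≥ m‖x^{k+1} − xᵏ‖, and summing: ‖x* − xᵏ‖ ≤ Σ_{n=k}^{∞} ‖x^{n+1} − xⁿ‖ ≤ (1/m)φ(rₖ) for all k ≥ k₀. -/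

import Mathlib

/-!
The tangent-line inequality of a concave function turns the hypothesis into
`m ‖x (k+1) - x k‖ ≤ φ (r k) - φ (r (k+1))`, so the step lengths are dominated by the
decrements of the nonnegative sequence `φ (r k) / m`; telescoping the triangle inequality and
passing to the limit bounds `‖x* - x k‖` by `φ (r k) / m`.
-/

open Filter Topology

theorem ConcaveOn.mul_sub_le_sub_of_hasDerivAt {S : Set ℝ} {f : ℝ → ℝ} {f' x y : ℝ}
    (hfc : ConcaveOn ℝ S f) (hx : x ∈ S) (hy : y ∈ S) (hf' : HasDerivAt f f' x) :
    f' * (x - y) ≤ f x - f y := by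
  rcases lt_trichotomy y x with hyx | rfl | hxy
  · have := hfc.le_slope_of_hasDerivAt hy hx hyx hf'
    rwa [slope_def_field, le_div_iff₀ (sub_pos.2 hyx)] at this
  · simp
  · have := hfc.slope_le_of_hasDerivAt hx hy hxy hf'
    rw [slope_def_field, div_le_iff₀ (sub_pos.2 hxy)] at this
    linarith

theorem dist_le_of_tendsto_of_dist_succ_le_sub {α : Type*} [PseudoMetricSpace α] {f : ℕ → α}
    {l : α} {a : ℕ → ℝ} {k : ℕ} (hf : Tendsto f atTop (𝓝 l))
    (hdist : ∀ n ≥ k, dist (f n) (f (n + 1)) ≤ a n - a (n + 1)) (ha : ∀ n ≥ k, 0 ≤ a n) :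
    dist (f k) l ≤ a k := by
  refine le_of_tendsto (tendsto_const_nhds.dist hf) (eventually_atTop.2 ⟨k, fun N hN => ?_⟩)
  calc dist (f k) (f N) ≤ ∑ i ∈ Finset.Ico k N, (a i - a (i + 1)) :=
        dist_le_Ico_sum_of_dist_le hN fun hki _ => hdist _ hki
    _ = a k - a N := by
        rw [← neg_sub, ← Finset.sum_Ico_sub (f := a) hN, ← Finset.sum_neg_distrib]
        simp only [neg_sub]
    _ ≤ a k := sub_le_self _ (ha N hN)

theorem stmt_19_general {H : Type*} [NormedAddCommGroup H] [InnerProductSpace ℝ H]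
    (η : ℝ) (φ φ' : ℝ → ℝ)
    (hconc : ConcaveOn ℝ (Set.Ico 0 η) φ)
    (hφnonneg : ∀ t ∈ Set.Ioo 0 η, 0 ≤ φ t)
    (hderiv : ∀ t ∈ Set.Ioo 0 η, HasDerivAt φ (φ' t) t)
    (r : ℕ → ℝ) (x : ℕ → H) (xstar : H) (m : ℝ) (k₀ : ℕ) (hm : 0 < m)
    (hrpos : ∀ k, 0 < r k) (hrlt : ∀ k, r k < η)
    (hx : Filter.Tendsto x Filter.atTop (nhds xstar))
    (hineq : ∀ k ≥ k₀, φ' (r k) * (r k - r (k + 1)) ≥ m * ‖x (k + 1) - x k‖) :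
    (∀ k ≥ k₀, m * ‖x (k + 1) - x k‖ ≤ φ (r k) - φ (r (k + 1))) ∧
    ∀ k ≥ k₀, ‖xstar - x k‖ ≤ (1 / m) * φ (r k) := by
  have hr : ∀ k, r k ∈ Set.Ioo 0 η := fun k => ⟨hrpos k, hrlt k⟩
  have hstep : ∀ k ≥ k₀, m * ‖x (k + 1) - x k‖ ≤ φ (r k) - φ (r (k + 1)) := fun k hk =>
    (hineq k hk).trans <| hconc.mul_sub_le_sub_of_hasDerivAt (Set.Ioo_subset_Ico_self (hr k))
      (Set.Ioo_subset_Ico_self (hr (k + 1))) (hderiv _ (hr k))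
  refine ⟨hstep, fun k hk => ?_⟩
  rw [← dist_eq_norm, dist_comm]
  refine dist_le_of_tendsto_of_dist_succ_le_sub hx (fun n hn => ?_)
    (fun n _ => mul_nonneg (by positivity) (hφnonneg _ (hr n)))
  rw [dist_comm, dist_eq_norm, ← mul_sub, one_div, le_inv_mul_iff₀ hm]
  exact hstep n (hk.trans hn)

theorem stmt_19 {H : Type*} [NormedAddCommGroup H] [InnerProductSpace ℝ H]
    (η : ℝ) (hη : 0 < η) (φ φ' : ℝ → ℝ)
    (hconc : ConcaveOn ℝ (Set.Ico 0 η) φ) (hφ0 : φ 0 = 0)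
    (hφnonneg : ∀ t ∈ Set.Ioo 0 η, 0 ≤ φ t)
    (hderiv : ∀ t ∈ Set.Ioo 0 η, HasDerivAt φ (φ' t) t)
    (hφ'pos : ∀ t ∈ Set.Ioo 0 η, 0 < φ' t)
    (r : ℕ → ℝ) (x : ℕ → H) (xstar : H) (m : ℝ) (k₀ : ℕ) (hm : 0 < m)
    (hrpos : ∀ k, 0 < r k) (hrmono : ∀ k, r (k + 1) ≤ r k) (hrlt : ∀ k, r k < η)
    (hx : Filter.Tendsto x Filter.atTop (nhds xstar))
    (hineq : ∀ k ≥ k₀, φ' (r k) * (r k - r (k + 1)) ≥ m * ‖x (k + 1) - x k‖) :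
    (∀ k ≥ k₀, m * ‖x (k + 1) - x k‖ ≤ φ (r k) - φ (r (k + 1))) ∧
    ∀ k ≥ k₀, ‖xstar - x k‖ ≤ (1 / m) * φ (r k) :=
  stmt_19_general η φ φ' hconc hφnonneg hderiv r x xstar m k₀ hm hrpos hrlt hx hineq
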